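/- Let p, h > 0 with coefficients s = sinh(ph), c = cosh(ph), b₂ = p/(2(phc - s)), and a₁, b₁, c₁, d₁ as in the paper. Then the second derivatives of the two adjacent pieces of the exponential B-spline agree at the knot x_{i+1}: the central-piece second derivative value p²(c₁e^{ph} + d₁e^{-ph}) equals the outer-piece value b₂·p·sinh(ph), and both equal α₃ = p²s/(2(phc - s)). -/

import Mathlib

lemma sinh_lt_mul_cosh' {x : ℝ} (hx : 0 < x) : Real.sinh x < x * Real.cosh x := by
  have H : StrictMonoOn (fun y : ℝ => y * Real.cosh y - Real.sinh y) (Set.Ici 0) := by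
    apply strictMonoOn_of_deriv_pos (convex_Ici 0)
    · fun_prop
    · intro y hy
      rw [interior_Ici] at hy
      have hd : deriv (fun y : ℝ => y * Real.cosh y - Real.sinh y) y = y * Real.sinh y := by
        have h1 : HasDerivAt (fun y : ℝ => y * Real.cosh y - Real.sinh y)
            (1 * Real.cosh y + y * Real.sinh y - Real.cosh y) y := by
          exact ((hasDerivAt_id y).mul (Real.hasDerivAt_cosh y)).sub (Real.hasDerivAt_sinh y)
        rw [h1.deriv]; ring
      rw [hd]
      exact mul_pos hy (by rwa [Real.sinh_pos_iff])
  have := H (Set.self_mem_Ici) (Set.mem_Ici.2 hx.le) hx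
  simpa using this

theorem exp_bspline_second_deriv_match (p h : ℝ) (hp : 0 < p) (hh : 0 < h)
    (s c c₁ d₁ b₂ : ℝ)
    (hs : s = Real.sinh (p*h)) (hc : c = Real.cosh (p*h))
    (hc₁ : c₁ = (Real.exp (-(p*h)) * (1 - c) + s * (Real.exp (-(p*h)) - 1)) /
        (4 * (p*h*c - s) * (1 - c)))
    (hd₁ : d₁ = (Real.exp (p*h) * (c - 1) + s * (Real.exp (p*h) - 1)) /
        (4 * (p*h*c - s) * (1 - c)))
    (hb₂ : b₂ = p / (2 * (p*h*c - s))) :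
    p^2 * (c₁ * Real.exp (p*h) + d₁ * Real.exp (-(p*h))) = b₂ * p * Real.sinh (p*h)
    ∧ b₂ * p * Real.sinh (p*h) = p^2 * s / (2 * (p*h*c - s)) := by
  have hph : 0 < p * h := mul_pos hp hh
  have hD : p*h*c - s ≠ 0 := by
    rw [hc, hs]; exact ne_of_gt (sub_pos.2 (sinh_lt_mul_cosh' hph))
  have hC : (1 : ℝ) - c ≠ 0 := by
    rw [hc]; exact ne_of_lt (sub_neg.2 (Real.one_lt_cosh.2 (ne_of_gt hph)))
  have hinv : Real.exp (-(p*h)) = 2*c - Real.exp (p*h) := by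
    rw [hc, Real.cosh_eq]; ring
  have h2 : Real.exp (p*h) * Real.exp (-(p*h)) = 1 := by
    rw [← Real.exp_add]; simp
  have hR : Real.exp (p*h) * (2*c - Real.exp (p*h)) = 1 := by
    rw [← hinv]; exact h2
  have num : (Real.exp (-(p*h)) * (1 - c) + s * (Real.exp (-(p*h)) - 1)) * Real.exp (p*h)
      + (Real.exp (p*h) * (c - 1) + s * (Real.exp (p*h) - 1)) * (2*c - Real.exp (p*h))
      = s * (2 - 2*c) := by
    rw [hinv]; linear_combination 2*s*hR
  have key : c₁ * Real.exp (p*h) + d₁ * Real.exp (-(p*h)) = s / (2*(p*h*c - s)) := by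
    rw [hinv] at num
    rw [hc₁, hd₁, hinv, div_mul_eq_mul_div, div_mul_eq_mul_div, ← add_div, num]
    field_simp
    ring
  constructor
  · rw [key, hb₂, hs]; field_simp
  · rw [hb₂, hs]; ring
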